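/- arXiv:2304.07424 — 4 statements merged into one kernel-verified Lean document; each statement's English description precedes it below -/
import Mathlib

section
/- Let K be a compact subset of R^D with finite (D-d)-dimensional Hausdorff measure, 0 < d < D. Then there exists a constant C2 > 0 depending only on d and D such that for all sufficiently small ε > 0 the ε-parallel set K^{+ε} = ∪_{x∈K} B(x,ε) satisfies σ_D(K^{+ε}) ≥ C2 · ε^d · σ_{D-d}(K), where σ_D is the D-dimensional Lebesgue (Hausdorff) measure on R^D. -/
/-!
For `ε > 0` let `N(ε)` be the size of a maximal `ε`-separated subset of `K`. The closed `ε`-balls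
around its points cover `K`, so `μH[D-d] K ≤ 2 N(ε) (2ε)^(D-d)` for small `ε`; the `ε/2`-balls
around them are disjoint and lie in `K^{+ε}`, so `vol K^{+ε} ≥ N(ε) (ε/2)^D vol B(0,1)`.
Comparing the two bounds gives `C2 = vol B(0,1) / 2^(2D+1)`.
-/

open MeasureTheory Metric Set Filter Function Topology
open scoped ENNReal NNReal

namespace Metric

variable {X : Type*} [PseudoEMetricSpace X] {A : Set X} {ε : ℝ≥0}

lemma finite_maximalSeparatedSet : (maximalSeparatedSet ε A).Finite := by
  by_cases h : packingNumber ε A = ⊤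
  · simp [maximalSeparatedSet, h]
  · exact Set.encard_ne_top_iff.mp (by rwa [encard_maximalSeparatedSet h])

lemma _root_.TotallyBounded.packingNumber_ne_top (hA : TotallyBounded A) (hε : ε ≠ 0) :
    packingNumber ε A ≠ ⊤ := by
  obtain ⟨C, -, hC, hAC⟩ := exists_finite_isCover_of_totallyBounded (half_pos hε.bot_lt).ne' hA
  refine ne_top_of_le_ne_top hC.encard_lt_top.ne ?_
  calc packingNumber ε A = packingNumber (2 * (ε / 2)) A := by rw [mul_div_cancel₀ _ two_ne_zero]
    _ ≤ externalCoveringNumber (ε / 2) A := packingNumber_two_mul_le_externalCoveringNumber _ _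
    _ ≤ C.encard := hAC.externalCoveringNumber_le_encard

end Metric

section HausdorffMeasure

variable {X : Type*} [EMetricSpace X] [MeasurableSpace X] [BorelSpace X]

theorem hausdorffMeasure_le_liminf_packingNumber {s : ℝ} (hs : 0 ≤ s) {A : Set X}
    (hA : TotallyBounded A) :
    μH[s] A ≤ liminf (fun ε : ℝ≥0 ↦ packingNumber ε A * (2 * (ε : ℝ≥0∞)) ^ s) (𝓝[>] 0) := by
  have hr : Tendsto (fun ε : ℝ≥0 ↦ 2 * (ε : ℝ≥0∞)) (𝓝[>] 0) (𝓝 0) := by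
    have : Continuous (fun ε : ℝ≥0 ↦ 2 * (ε : ℝ≥0∞)) :=
      (ENNReal.continuous_const_mul ENNReal.ofNat_ne_top).comp ENNReal.continuous_coe
    simpa using (this.tendsto 0).mono_left nhdsWithin_le_nhds
  have hcover : ∀ᶠ ε : ℝ≥0 in 𝓝[>] 0,
      A ⊆ ⋃ x : maximalSeparatedSet ε A, closedEBall (x : X) ε := by
    filter_upwards [self_mem_nhdsWithin] with ε hε
    simpa only [iUnion_subtype, isCover_iff_subset_iUnion_closedEBall]
      using isCover_maximalSeparatedSet (hA.packingNumber_ne_top (ne_of_gt hε))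
  have := fun ε : ℝ≥0 ↦ (finite_maximalSeparatedSet (ε := ε) (A := A)).countable.to_subtype
  refine (Measure.hausdorffMeasure_le_liminf_tsum s A _ hr _
    (.of_forall fun ε x ↦ ediam_closedEBall_le) hcover).trans
    (liminf_le_liminf (.of_forall fun ε ↦ ?_))
  calc ∑' x : maximalSeparatedSet ε A, ediam (closedEBall (x : X) ε) ^ s
      ≤ ∑' x : maximalSeparatedSet ε A, (2 * (ε : ℝ≥0∞)) ^ s :=
        ENNReal.tsum_le_tsum fun x ↦ ENNReal.rpow_le_rpow ediam_closedEBall_le hs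
    _ = (maximalSeparatedSet ε A).encard * (2 * (ε : ℝ≥0∞)) ^ s := ENNReal.tsum_const _
    _ ≤ packingNumber ε A * (2 * (ε : ℝ≥0∞)) ^ s := by
        gcongr
        exact isSeparated_maximalSeparatedSet.encard_le_packingNumber maximalSeparatedSet_subset

theorem eventually_hausdorffMeasure_le_two_mul_packingNumber {s : ℝ} (hs : 0 ≤ s) {A : Set X}
    (hA : TotallyBounded A) (hfin : μH[s] A ≠ ⊤) :
    ∀ᶠ ε : ℝ≥0 in 𝓝[>] 0, μH[s] A ≤ 2 * (packingNumber ε A * (2 * (ε : ℝ≥0∞)) ^ s) := by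
  rcases eq_or_ne (μH[s] A) 0 with h0 | h0
  · simp [h0]
  have hlt : μH[s] A / 2 <
      liminf (fun ε : ℝ≥0 ↦ packingNumber ε A * (2 * (ε : ℝ≥0∞)) ^ s) (𝓝[>] 0) :=
    (ENNReal.half_lt_self h0 hfin).trans_le (hausdorffMeasure_le_liminf_packingNumber hs hA)
  filter_upwards [eventually_lt_of_lt_liminf hlt] with ε hε
  rw [mul_comm]
  exact (ENNReal.div_le_iff_le_mul (.inl two_ne_zero) (.inl ENNReal.ofNat_ne_top)).mp hε.le

end HausdorffMeasure

theorem packingNumber_mul_le_measure_cthickening {Y : Type*} [PseudoMetricSpace Y]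
    [MeasurableSpace Y] [OpensMeasurableSpace Y] (μ : Measure Y) {A : Set Y} {ε : ℝ≥0} {c : ℝ≥0∞}
    (hA : packingNumber ε A ≠ ⊤) (hc : ∀ x ∈ A, c ≤ μ (closedBall x (ε / 2))) :
    packingNumber ε A * c ≤ μ (cthickening (ε / 2) A) := by
  set M := maximalSeparatedSet ε A
  have := (finite_maximalSeparatedSet (ε := ε) (A := A)).countable.to_subtype
  have hdisj : Pairwise (Disjoint on fun x : M ↦ closedBall (x : Y) (ε / 2)) := by
    intro x y hxy
    refine closedBall_disjoint_closedBall ?_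
    have : (ε : ℝ≥0∞) < edist (x : Y) y :=
      isSeparated_maximalSeparatedSet x.2 y.2 (Subtype.coe_ne_coe.mpr hxy)
    rw [edist_nndist, ENNReal.coe_lt_coe, ← NNReal.coe_lt_coe, coe_nndist] at this
    linarith
  calc packingNumber ε A * c = ∑' x : M, c := by
        rw [ENNReal.tsum_const, ← encard_maximalSeparatedSet hA]; rfl
    _ ≤ ∑' x : M, μ (closedBall x (ε / 2)) :=
        ENNReal.tsum_le_tsum fun x ↦ hc x (maximalSeparatedSet_subset x.2)
    _ = μ (⋃ x : M, closedBall x (ε / 2)) :=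
        (measure_iUnion hdisj fun _ ↦ measurableSet_closedBall).symm
    _ ≤ μ (cthickening (ε / 2) A) := measure_mono <| iUnion_subset fun x ↦
        closedBall_subset_cthickening (maximalSeparatedSet_subset x.2) _

theorem two_mul_rpow_sub_mul_pow_le (D d : ℕ) {ε : ℝ} (hε : 0 < ε) :
    (2 * ε) ^ ((D : ℝ) - d) * ε ^ d ≤ 2 ^ D * ε ^ D := by
  have hpow : (2 : ℝ) ^ ((D : ℝ) - d) ≤ 2 ^ D := by
    rw [← Real.rpow_natCast 2 D]
    exact Real.rpow_le_rpow_of_exponent_le one_le_two (by linarith [(d.cast_nonneg : (0 : ℝ) ≤ d)])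
  calc (2 * ε) ^ ((D : ℝ) - d) * ε ^ d = 2 ^ ((D : ℝ) - d) * ε ^ D := by
        rw [Real.mul_rpow zero_le_two hε.le, mul_assoc, ← Real.rpow_natCast ε d,
          ← Real.rpow_add hε, sub_add_cancel, Real.rpow_natCast]
    _ ≤ 2 ^ D * ε ^ D := by gcongr

theorem ofReal_div_two_pow_mul_two_mul_rpow_le (D d : ℕ) {v : ℝ} (hv : 0 ≤ v) {ε : ℝ≥0}
    (hε : 0 < ε) :
    ENNReal.ofReal (v / 2 ^ (2 * D + 1) * ε ^ d) * (2 * (2 * (ε : ℝ≥0∞)) ^ ((D : ℝ) - d)) ≤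
      ENNReal.ofReal (((ε : ℝ) / 2) ^ D) * ENNReal.ofReal v := by
  have hε' : (0 : ℝ) < ε := hε
  rw [← ENNReal.ofReal_coe_nnreal, ← ENNReal.ofReal_ofNat 2, ← ENNReal.ofReal_mul zero_le_two,
    ENNReal.ofReal_rpow_of_pos (by positivity), ← ENNReal.ofReal_mul zero_le_two,
    ← ENNReal.ofReal_mul (by positivity), ← ENNReal.ofReal_mul (by positivity)]
  refine ENNReal.ofReal_le_ofReal ?_
  calc v / 2 ^ (2 * D + 1) * ε ^ d * (2 * (2 * ε) ^ ((D : ℝ) - d))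
      = v / 2 ^ (2 * D + 1) * 2 * ((2 * ε) ^ ((D : ℝ) - d) * ε ^ d) := by ring
    _ ≤ v / 2 ^ (2 * D + 1) * 2 * (2 ^ D * ε ^ D) :=
        mul_le_mul_of_nonneg_left (two_mul_rpow_sub_mul_pow_le D d hε') (by positivity)
    _ = ((ε : ℝ) / 2) ^ D * v := by rw [pow_succ, pow_mul', div_pow]; field_simp

theorem stmt1_general (D d : ℕ) (hdD : d < D) :
    ∃ C2 : ℝ, 0 < C2 ∧
      ∀ K : Set (EuclideanSpace ℝ (Fin D)), IsCompact K →
        μH[(D - d : ℝ)] K < ⊤ →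
        ∀ᶠ ε in nhdsWithin (0 : ℝ) (Set.Ioi 0),
          ENNReal.ofReal (C2 * ε ^ d) * μH[(D - d : ℝ)] K ≤
            volume (Metric.cthickening ε K) := by
  set V := volume (ball (0 : EuclideanSpace ℝ (Fin D)) 1)
  have hV : V ≠ ⊤ := measure_ball_lt_top.ne
  have hV0 : 0 < V.toReal := ENNReal.toReal_pos (measure_ball_pos volume 0 one_pos).ne' hV
  refine ⟨V.toReal / 2 ^ (2 * D + 1), by positivity, fun K hK hfin ↦ ?_⟩
  set C2 := V.toReal / 2 ^ (2 * D + 1)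
  set s : ℝ := D - d
  have hs : 0 ≤ s := sub_nonneg.mpr (Nat.cast_le.mpr hdD.le)
  rw [← NNReal.coe_zero, ← NNReal.map_coe_nhdsGT, eventually_map]
  filter_upwards [eventually_hausdorffMeasure_le_two_mul_packingNumber hs hK.totallyBounded
    hfin.ne, self_mem_nhdsWithin] with ε hHaus hε
  calc ENNReal.ofReal (C2 * ε ^ d) * μH[s] K
      ≤ ENNReal.ofReal (C2 * ε ^ d) * (2 * (packingNumber ε K * (2 * (ε : ℝ≥0∞)) ^ s)) := by
        gcongr
    _ = packingNumber ε K * (ENNReal.ofReal (C2 * ε ^ d) * (2 * (2 * (ε : ℝ≥0∞)) ^ s)) := by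
        ring
    _ ≤ packingNumber ε K * (ENNReal.ofReal (((ε : ℝ) / 2) ^ D) * V) := by
        gcongr _ * ?_
        simpa only [ENNReal.ofReal_toReal hV]
          using ofReal_div_two_pow_mul_two_mul_rpow_le D d hV0.le hε
    _ ≤ volume (cthickening ((ε : ℝ) / 2) K) :=
        packingNumber_mul_le_measure_cthickening volume
          (hK.totallyBounded.packingNumber_ne_top (ne_of_gt hε)) fun x _ ↦ by
            rw [Measure.addHaar_closedBall volume x (by positivity), finrank_euclideanSpace_fin]
    _ ≤ volume (cthickening ε K) := measure_mono (cthickening_mono (by linarith [ε.2]) K)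

/-- volume of the `ε`-parallel set. For `K` compact in `ℝ^D` with
finite `(D-d)`-dimensional Hausdorff measure, `0 < d < D`, there is `C2 > 0`
depending only on `d, D` such that for all sufficiently small `ε > 0` the
closed `ε`-neighborhood `K^{+ε}` satisfies
`σ_D(K^{+ε}) ≥ C2 * ε^d * σ_{D-d}(K)`. -/
theorem stmt1 (D d : ℕ) (hd : 0 < d) (hdD : d < D) :
    ∃ C2 : ℝ, 0 < C2 ∧
      ∀ K : Set (EuclideanSpace ℝ (Fin D)), IsCompact K →
        μH[(D - d : ℝ)] K < ⊤ →
        ∀ᶠ ε in nhdsWithin (0 : ℝ) (Set.Ioi 0),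
          ENNReal.ofReal (C2 * ε ^ d) * μH[(D - d : ℝ)] K ≤
            volume (Metric.cthickening ε K) :=
  stmt1_general D d hdD
end

section
/- Let T be a compact subset of R^d and let f : T → R^d be a C^1 function (extendable to a C^1 function on a neighborhood of T). Fix u ∈ R^d. Assume f has no solutions of f(t)=u on the boundary ∂T, and that for every interior point t of T with f(t)=u one has det(f'(t)) ≠ 0. Then the number of solutions N_u(f,T) = #{t ∈ T : f(t)=u} is finite, and for all sufficiently small δ > 0, N_u(f,T) = (1/λ_d(B(0,δ))) ∫_T 1_{|f(t)-u|<δ} |det f'(t)| dt. -/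
/-! By the inverse function theorem `f` is a local homeomorphism at every solution of `f t = u`;
since no solution lies on `∂T`, the solutions form a compact discrete set, hence a finite one.
Separate them by disjoint open sheets `V s ⊆ interior T` on which `f` is injective. For small `δ`
the ball `B(u, δ)` lies in every `f(V s)`, and by compactness every `t ∈ T` with `‖f t - u‖ < δ`
lies in some sheet. The integral then splits into one integral per sheet, and by the change of
variables formula each of them equals `λ_d(B(u, δ)) = λ_d(B(0, δ))`. -/

open MeasureTheory Metric Set Filter Topology
open scoped ENNReal

theorem eventually_ball_subset_of_mem_nhds {X : Type*} [PseudoMetricSpace X] {x : X} {W : Set X}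
    (hW : W ∈ 𝓝 x) : ∀ᶠ δ in 𝓝[>] (0 : ℝ), ball x δ ⊆ W := by
  obtain ⟨ε, hε, hεW⟩ := Metric.mem_nhds_iff.1 hW
  filter_upwards [Ioo_mem_nhdsGT hε] with δ hδ using (ball_subset_ball hδ.2.le).trans hεW

theorem IsCompact.eventually_inter_preimage_ball_subset {X Y : Type*} [TopologicalSpace X]
    [MetricSpace Y] {K V : Set X} {f : X → Y} {y : Y} (hK : IsCompact K) (hf : ContinuousOn f K)
    (hV : IsOpen V) (hy : ∀ x ∈ K, f x = y → x ∈ V) :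
    ∀ᶠ δ in 𝓝[>] (0 : ℝ), K ∩ f ⁻¹' ball y δ ⊆ V := by
  have hclosed : IsClosed (f '' (K \ V)) :=
    ((hK.diff hV).image_of_continuousOn (hf.mono sdiff_subset)).isClosed
  have hy' : y ∉ f '' (K \ V) := by
    rintro ⟨x, ⟨hxK, hxV⟩, hxy⟩
    exact hxV (hy x hxK hxy)
  filter_upwards [eventually_ball_subset_of_mem_nhds (hclosed.isOpen_compl.mem_nhds hy')]
    with δ hδ x ⟨hxK, hxδ⟩
  by_contra hxV
  exact hδ hxδ ⟨x, ⟨hxK, hxV⟩, rfl⟩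

theorem IsLocalHomeomorphOn.finite_of_isCompact {X Y : Type*} [TopologicalSpace X]
    [TopologicalSpace Y] {f : X → Y} {S : Set X} {y : Y} (hf : IsLocalHomeomorphOn f S)
    (hS : IsCompact S) (hfS : MapsTo f S {y}) : S.Finite :=
  hS.finite (hf.isDiscrete_of_image (subsingleton_singleton.anti hfS.image_subset).isDiscrete)

theorem IsLocalHomeomorphOn.exists_pairwiseDisjoint_injOn {X Y : Type*} [TopologicalSpace X]
    [T2Space X] [TopologicalSpace Y] {f : X → Y} {S N : Set X} (hf : IsLocalHomeomorphOn f S)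
    (hS : S.Finite) (hN : IsOpen N) (hSN : S ⊆ N) :
    ∃ V : X → Set X, S.PairwiseDisjoint V ∧ (∀ s ∈ S, s ∈ V s) ∧ (∀ s ∈ S, IsOpen (V s)) ∧
      (∀ s ∈ S, V s ⊆ N) ∧ (∀ s ∈ S, InjOn f (V s)) ∧ ∀ s ∈ S, IsOpen (f '' V s) := by
  obtain ⟨W, hW, hWdisj⟩ := hS.t2_separation
  have hsheet : ∀ s ∈ S, ∃ V : Set X, V ⊆ W s ∧
      s ∈ V ∧ IsOpen V ∧ V ⊆ N ∧ InjOn f V ∧ IsOpen (f '' V) := by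
    intro s hs
    obtain ⟨e, hse, rfl⟩ := hf s hs
    have hV : IsOpen (W s ∩ e.source ∩ N) := ((hW s).2.inter e.open_source).inter hN
    have hVe : W s ∩ e.source ∩ N ⊆ e.source := inter_subset_left.trans inter_subset_right
    exact ⟨_, inter_subset_left.trans inter_subset_left, ⟨⟨(hW s).1, hse⟩, hSN hs⟩, hV,
      inter_subset_right, e.injOn.mono hVe, e.isOpen_image_of_subset_source hV hVe⟩
  choose! V hVW hsV hVo hVN hVinj hfVo using hsheet
  exact ⟨V, hWdisj.mono_on hVW, hsV, hVo, hVN, hVinj, hfVo⟩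

section

variable {E : Type*} [NormedAddCommGroup E] [NormedSpace ℝ E] [FiniteDimensional ℝ E]

theorem isLocalHomeomorphOn_of_contDiffAt_of_det_ne_zero {f : E → E} {s : Set E}
    (hf : ∀ x ∈ s, ContDiffAt ℝ 1 f x) (hdet : ∀ x ∈ s, (fderiv ℝ f x).det ≠ 0) :
    IsLocalHomeomorphOn f s := by
  intro x hx
  have hf' : HasFDerivAt f
      ((fderiv ℝ f x).toContinuousLinearEquivOfDetNeZero (hdet x hx) : E →L[ℝ] E) x := by
    rw [ContinuousLinearMap.coe_toContinuousLinearEquivOfDetNeZero]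
    exact ((hf x hx).differentiableAt one_ne_zero).hasFDerivAt
  exact ⟨(hf x hx).toOpenPartialHomeomorph f hf' one_ne_zero,
    (hf x hx).mem_toOpenPartialHomeomorph_source hf' one_ne_zero, rfl⟩

variable [MeasurableSpace E] [BorelSpace E] (μ : Measure E) [μ.IsAddHaarMeasure]
  {f : E → E} {s : Set E}

theorem IsOpen.integrableOn_abs_det_fderiv (hs : IsOpen s) (hf : DifferentiableOn ℝ f s)
    (hinj : InjOn f s) (hfs : μ (f '' s) ≠ ∞) :
    IntegrableOn (fun x => |(fderiv ℝ f x).det|) s μ := by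
  have hf' : ∀ x ∈ s, HasFDerivWithinAt f (fderiv ℝ f x) s x := fun x hx =>
    ((hf x hx).differentiableAt (hs.mem_nhds hx)).hasFDerivAt.hasFDerivWithinAt
  simpa using (integrableOn_image_iff_integrableOn_abs_det_fderiv_smul μ hs.measurableSet hf' hinj
    (fun _ => (1 : ℝ))).1 (integrableOn_const hfs)

theorem IsOpen.setIntegral_abs_det_fderiv (hs : IsOpen s) (hf : DifferentiableOn ℝ f s)
    (hinj : InjOn f s) : ∫ x in s, |(fderiv ℝ f x).det| ∂μ = μ.real (f '' s) := by
  have hf' : ∀ x ∈ s, HasFDerivWithinAt f (fderiv ℝ f x) s x := fun x hx =>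
    ((hf x hx).differentiableAt (hs.mem_nhds hx)).hasFDerivAt.hasFDerivWithinAt
  simpa using (integral_image_eq_integral_abs_det_fderiv_smul μ hs.measurableSet hf' hinj
    (fun _ => (1 : ℝ))).symm

theorem setIntegral_ite_norm_sub_lt_eq_ncard_mul {ι : Type*} {T : Set E} {u : E} {δ : ℝ}
    (hT : MeasurableSet T) {S : Set ι} (hS : S.Finite) {V : ι → Set E}
    (hV : ∀ i ∈ S, IsOpen (V i)) (hVT : ∀ i ∈ S, V i ⊆ T) (hdisj : S.PairwiseDisjoint V)
    (hinj : ∀ i ∈ S, InjOn f (V i)) (hdiff : ∀ i ∈ S, DifferentiableOn ℝ f (V i))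
    (hball : ∀ i ∈ S, ball u δ ⊆ f '' V i) (hcover : T ∩ f ⁻¹' ball u δ ⊆ ⋃ i ∈ S, V i) :
    ∫ t in T, (if ‖f t - u‖ < δ then |(fderiv ℝ f t).det| else 0) ∂μ
      = S.ncard * μ.real (ball u δ) := by
  lift S to Finset ι using hS
  set A : ι → Set E := fun i => V i ∩ f ⁻¹' ball u δ
  have hA : ∀ i ∈ S, IsOpen (A i) := fun i hi =>
    (hdiff i hi).continuousOn.isOpen_inter_preimage (hV i hi) isOpen_ball
  have hTA : T ∩ f ⁻¹' ball u δ = ⋃ i ∈ S, A i := by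
    refine Subset.antisymm (fun t ht => ?_) (iUnion₂_subset fun i hi => ?_)
    · obtain ⟨i, hi, htV⟩ := mem_iUnion₂.1 (hcover ht)
      exact mem_iUnion₂.2 ⟨i, hi, htV, ht.2⟩
    · exact inter_subset_inter_left _ (hVT i hi)
  have hsheet : ∀ i ∈ S, IntegrableOn (fun x => |(fderiv ℝ f x).det|) (A i) μ ∧
      ∫ x in A i, |(fderiv ℝ f x).det| ∂μ = μ.real (ball u δ) := by
    intro i hi
    have hfA : f '' A i = ball u δ := by
      rw [image_inter_preimage]
      exact inter_eq_right.2 (hball i hi)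
    have hdiffA := (hdiff i hi).mono (inter_subset_left : A i ⊆ V i)
    have hinjA := (hinj i hi).mono (inter_subset_left : A i ⊆ V i)
    refine ⟨(hA i hi).integrableOn_abs_det_fderiv μ hdiffA hinjA ?_, ?_⟩
    · exact hfA ▸ measure_ball_lt_top.ne
    · rw [(hA i hi).setIntegral_abs_det_fderiv μ hdiffA hinjA, hfA]
  have hindicator : ∀ t ∈ T, (if ‖f t - u‖ < δ then |(fderiv ℝ f t).det| else 0)
      = (⋃ i ∈ S, A i).indicator (fun x => |(fderiv ℝ f x).det|) t := by
    intro t ht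
    by_cases hδ : ‖f t - u‖ < δ
    · rw [if_pos hδ, indicator_of_mem (hTA ▸ ⟨ht, mem_ball_iff_norm.2 hδ⟩)]
    · rw [if_neg hδ, indicator_of_notMem (hTA ▸ fun h => hδ (mem_ball_iff_norm.1 h.2))]
  rw [setIntegral_congr_fun hT hindicator,
    setIntegral_indicator (S.measurableSet_biUnion fun i hi => (hA i hi).measurableSet),
    ← hTA, inter_eq_right.2 inter_subset_left, hTA,
    integral_biUnion_finset S (fun i hi => (hA i hi).measurableSet)
      (hdisj.mono fun i => inter_subset_left) (fun i hi => (hsheet i hi).1),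
    Finset.sum_congr rfl (fun i hi => (hsheet i hi).2), Finset.sum_const, nsmul_eq_mul,
    ncard_coe_finset]

end

/-- Kac's counting formula: `T ⊂ ℝ^d` compact, `f` of class `C^1`
on an open neighborhood `U` of `T`, `u ∈ ℝ^d`, no solutions of `f(t) = u` on
the boundary `∂T`, and `det f'(t) ≠ 0` at each interior solution. Then the
number of solutions `N_u(f,T)` is finite and, for all sufficiently small
`δ > 0`, equals
`(1/λ_d(B(0,δ))) ∫_T 1_{‖f(t)-u‖<δ} |det f'(t)| dt`. -/
theorem stmt5 (d : ℕ) (T U : Set (EuclideanSpace ℝ (Fin d)))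
    (hT : IsCompact T) (hU : IsOpen U) (hTU : T ⊆ U)
    (f : EuclideanSpace ℝ (Fin d) → EuclideanSpace ℝ (Fin d))
    (hf : ContDiffOn ℝ 1 f U)
    (u : EuclideanSpace ℝ (Fin d))
    (hbd : ∀ t ∈ frontier T, f t ≠ u)
    (hreg : ∀ t ∈ interior T, f t = u →
      LinearMap.det ((fderiv ℝ f t).toLinearMap) ≠ 0) :
    {t ∈ T | f t = u}.Finite ∧
    ∀ᶠ δ in nhdsWithin (0 : ℝ) (Set.Ioi 0),
      ({t ∈ T | f t = u}.ncard : ℝ)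
        = (volume (ball (0 : EuclideanSpace ℝ (Fin d)) δ)).toReal⁻¹ *
          ∫ t in T, (if ‖f t - u‖ < δ then
              |LinearMap.det ((fderiv ℝ f t).toLinearMap)| else 0) ∂volume := by
  set S := {t ∈ T | f t = u}
  have hfT : ContinuousOn f T := hf.continuousOn.mono hTU
  have hSint : S ⊆ interior T := fun s hs =>
    by_contra fun h => hbd s ⟨subset_closure hs.1, h⟩ hs.2
  have hloc : IsLocalHomeomorphOn f S := isLocalHomeomorphOn_of_contDiffAt_of_det_ne_zero
    (fun s hs => hf.contDiffAt (hU.mem_nhds (hTU hs.1))) (fun s hs => hreg s (hSint hs) hs.2)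
  have hSfin : S.Finite := hloc.finite_of_isCompact
    (hT.of_isClosed_subset (hfT.preimage_isClosed_of_isClosed hT.isClosed isClosed_singleton)
      (sep_subset _ _)) fun s hs => hs.2
  refine ⟨hSfin, ?_⟩
  obtain ⟨V, hVdisj, hsV, hVo, hVT, hVinj, hfVo⟩ :=
    hloc.exists_pairwiseDisjoint_injOn hSfin isOpen_interior hSint
  replace hVT : ∀ s ∈ S, V s ⊆ T := fun s hs => (hVT s hs).trans interior_subset
  have hsmall : ∀ᶠ δ in 𝓝[>] (0 : ℝ),
      (∀ s ∈ S, ball u δ ⊆ f '' V s) ∧ T ∩ f ⁻¹' ball u δ ⊆ ⋃ s ∈ S, V s :=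
    (hSfin.eventually_all.2 fun s hs => eventually_ball_subset_of_mem_nhds
      ((hfVo s hs).mem_nhds ⟨s, hsV s hs, hs.2⟩)).and
    (hT.eventually_inter_preimage_ball_subset hfT (isOpen_biUnion hVo)
      fun t ht htu => mem_iUnion₂.2 ⟨t, ⟨ht, htu⟩, hsV t ⟨ht, htu⟩⟩)
  filter_upwards [hsmall, self_mem_nhdsWithin] with δ ⟨hball, hcover⟩ (hδ : 0 < δ)
  have hvol : (volume (ball (0 : EuclideanSpace ℝ (Fin d)) δ)).toReal ≠ 0 :=
    ENNReal.toReal_ne_zero.2 ⟨(measure_ball_pos volume 0 hδ).ne', measure_ball_lt_top.ne⟩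
  rw [setIntegral_ite_norm_sub_lt_eq_ncard_mul volume hT.measurableSet hSfin
    hVo hVT hVdisj hVinj
    (fun s hs => (hf.differentiableOn one_ne_zero).mono ((hVT s hs).trans hTU)) hball hcover,
    measureReal_def, Measure.addHaar_ball_center volume u δ]
  field_simp
end

section
/- Let T be a compact subset of R^d, and let X_n, X : T → R^d be C^1 functions such that X_n → X in the C^1 topology (uniform convergence of functions and derivatives on T). Fix u ∈ R^d. Assume X(t) ≠ u for all t ∈ ∂T, and that for every t ∈ T with X(t) = u one has det(X'(t)) ≠ 0. Then for all sufficiently large n, N_u(X_n,T) = N_u(X,T); in particular N_u(X_n,T) → N_u(X,T). -/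
/-! The roots of `X` in `T` lie in the interior of `T` and are isolated because `X'` is invertible
there, so by compactness there are finitely many. Around each root `t` take a small closed ball on
which `X'` stays close to `A = X'(t)`. For large `n` the derivative of `X_n` is uniformly close to
`X'`, so on each ball `X_n` is a small perturbation of the invertible linear map `A`: it is
injective there, and since `X_n(t)` is close to `u`, the quantitative inverse function theorem
makes it hit `u`. On the compact rest of `T` the image of `X` stays a positive distance away from
`u`, so uniform convergence leaves `X_n` no roots there. Hence, for large `n`, the roots of
`X_n` correspond one-to-one to those of `X`. -/

open MeasureTheory Metric Set Filter

open scoped NNReal Topology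

theorem Set.ncard_eq_of_pairwiseDisjoint_of_existsUnique {α β : Type*} {S : Set β} {R : Set α}
    {B : β → Set α} (hB : S.PairwiseDisjoint B) (hR : R ⊆ ⋃ t ∈ S, B t)
    (huniq : ∀ t ∈ S, ∃! x, x ∈ B t ∧ x ∈ R) :
    R.ncard = S.ncard := by
  choose σ hσ using fun t ht => (huniq t ht).exists
  refine (ncard_congr σ (fun t ht => (hσ t ht).2) (fun t t' ht ht' h => ?_) fun x hx => ?_).symm
  · exact hB.elim_set ht ht' (σ t ht) (hσ t ht).1 (h ▸ (hσ t' ht').1)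
  · obtain ⟨t, ht, hxt⟩ := mem_iUnion₂.1 (hR hx)
    exact ⟨t, ht, (huniq t ht).unique (hσ t ht) ⟨hxt, hx⟩⟩

theorem Set.Finite.eventually_pairwiseDisjoint_closedBall {α : Type*} [MetricSpace α]
    {S : Set α} (hS : S.Finite) :
    ∀ᶠ r in 𝓝 (0 : ℝ), S.PairwiseDisjoint (closedBall · r) := by
  have hpair : ∀ t ∈ S, ∀ t' ∈ S, ∀ᶠ r in 𝓝 (0 : ℝ), t ≠ t' →
      Disjoint (closedBall t r) (closedBall t' r) := by
    intro t _ t' _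
    rcases eq_or_ne t t' with rfl | hne
    · exact Eventually.of_forall fun _ h => absurd rfl h
    filter_upwards [eventually_lt_nhds (half_pos (dist_pos.2 hne))] with r hr _
    exact closedBall_disjoint_closedBall (by linarith)
  filter_upwards [hS.eventually_all.2 fun t ht => hS.eventually_all.2 (hpair t ht)]
    with r hr t ht t' ht' hne
  exact hr t ht t' ht' hne

theorem TendstoUniformlyOn.eventually_forall_ne {α β ι : Type*} [TopologicalSpace α]
    [MetricSpace β] {l : Filter ι} {K : Set α} {f : α → β} {g : ι → α → β} {u : β}
    (hconv : TendstoUniformlyOn g f l K) (hK : IsCompact K) (hf : ContinuousOn f K)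
    (hfu : ∀ x ∈ K, f x ≠ u) :
    ∀ᶠ n in l, ∀ x ∈ K, g n x ≠ u := by
  have hu : (f '' K)ᶜ ∈ 𝓝 u :=
    (hK.image_of_continuousOn hf).isClosed.isOpen_compl.mem_nhds fun ⟨x, hx, hxu⟩ => hfu x hx hxu
  obtain ⟨ε, hε, hball⟩ := Metric.mem_nhds_iff.1 hu
  filter_upwards [Metric.tendstoUniformlyOn_iff.1 hconv ε hε] with n hn x hx hgx
  exact hball (by rw [mem_ball, ← hgx]; exact hn x hx) (mem_image_of_mem f hx)

section Differentiable

variable {E F : Type*} [NormedAddCommGroup E] [NormedSpace ℝ E]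
  [NormedAddCommGroup F] [NormedSpace ℝ F]

theorem Convex.approximatesLinearOn_of_norm_fderiv_sub_le {s : Set E} (hs : Convex ℝ s)
    {f : E → F} {f' : E → E →L[ℝ] F} {A : E →L[ℝ] F} {c : ℝ≥0}
    (hf : ∀ x ∈ s, HasFDerivWithinAt f (f' x) s x) (hA : ∀ x ∈ s, ‖f' x - A‖ ≤ c) :
    ApproximatesLinearOn f A s c := fun _ hx _ hy =>
  hs.norm_image_sub_le_of_norm_hasFDerivWithin_le' hf hA hy hx

theorem TendstoUniformlyOn.eventually_approximatesLinearOn {ι : Type*} {l : Filter ι}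
    {s : Set E} (hs : Convex ℝ s) {g : ι → E → F} {g' : ι → E → E →L[ℝ] F}
    {f' : E → E →L[ℝ] F} {A : E →L[ℝ] F} {c₁ c : ℝ≥0}
    (hg : ∀ᶠ n in l, ∀ x ∈ s, HasFDerivWithinAt (g n) (g' n x) s x)
    (hconv : TendstoUniformlyOn g' f' l s) (hf' : ∀ x ∈ s, ‖f' x - A‖ ≤ c₁) (hc : c₁ < c) :
    ∀ᶠ n in l, ApproximatesLinearOn (g n) A s c := by
  filter_upwards [hg, Metric.tendstoUniformlyOn_iff.1 hconv (c - c₁) (sub_pos.2 hc)]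
    with n hgn hclose
  refine hs.approximatesLinearOn_of_norm_fderiv_sub_le hgn fun x hx => ?_
  calc ‖g' n x - A‖ ≤ ‖g' n x - f' x‖ + ‖f' x - A‖ := norm_sub_le_norm_sub_add_norm_sub _ _ _
    _ ≤ (c - c₁) + c₁ := by
        gcongr
        · rw [← dist_eq_norm, dist_comm]; exact (hclose x hx).le
        · exact hf' x hx
    _ = c := sub_add_cancel _ _

theorem ApproximatesLinearOn.existsUnique_mem_closedBall [CompleteSpace E] {f : E → F}
    {A : E ≃L[ℝ] F} {b : E} {ε : ℝ} {c : ℝ≥0}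
    (hf : ApproximatesLinearOn f (A : E →L[ℝ] F) (closedBall b ε) c)
    (hc : c < ‖(A.symm : F →L[ℝ] E)‖₊⁻¹) (hε : 0 ≤ ε) {y : F}
    (hy : dist y (f b) ≤ (‖(A.symm : F →L[ℝ] E)‖⁻¹ - c) * ε) :
    ∃! x, x ∈ closedBall b ε ∧ f x = y := by
  obtain ⟨x, hx, rfl⟩ := hf.surjOn_closedBall_of_nonlinearRightInverse A.toNonlinearRightInverse
    hε Subset.rfl hy
  exact ⟨x, ⟨hx, rfl⟩, fun z hz => hf.injOn (Or.inr hc) hz.1 hx hz.2⟩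

theorem IsCompact.finite_sep_eq_of_isInvertible {T : Set E} (hT : IsCompact T) {X : E → F}
    {X' : E → E →L[ℝ] F} {u : F} (hX : ContinuousOn X T)
    (hXd : ∀ t ∈ T, X t = u → HasFDerivAt X (X' t) t)
    (hreg : ∀ t ∈ T, X t = u → (X' t).IsInvertible) :
    {t ∈ T | X t = u}.Finite := by
  have hclosed : IsClosed {t ∈ T | X t = u} :=
    hX.preimage_isClosed_of_isClosed hT.isClosed isClosed_singleton
  refine (hT.of_isClosed_subset hclosed fun t ht => ht.1).finite
    (isDiscrete_iff_nhdsNE.2 fun t ht => ?_)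
  obtain ⟨A, hA⟩ := hreg t ht.1 ht.2
  have hne : ∀ᶠ s in 𝓝[≠] t, X s ≠ u :=
    (hXd t ht.1 ht.2).eventually_ne (hA ▸ ⟨_, A.antilipschitz⟩)
  rw [← empty_mem_iff_bot]
  filter_upwards [hne.filter_mono inf_le_left, mem_inf_of_right (mem_principal_self _)]
    with s h1 h2 using h1 h2.2

theorem eventually_existsUnique_mem_closedBall_of_tendstoUniformlyOn [CompleteSpace E]
    [Nontrivial E] {ι : Type*} {l : Filter ι} {V : Set E} {t : E} {u : F}
    {X' : E → E →L[ℝ] F} {Xn : ι → E → F} {Xn' : ι → E → E →L[ℝ] F} (hV : V ∈ 𝓝 t)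
    (hXn : ∀ᶠ n in l, ∀ x ∈ V, HasFDerivWithinAt (Xn n) (Xn' n x) V x)
    (hconv' : TendstoUniformlyOn Xn' X' l V) (hconv : Tendsto (fun n => Xn n t) l (𝓝 u))
    (hX' : ContinuousAt X' t) (hreg : (X' t).IsInvertible) :
    ∀ᶠ r in 𝓝[>] 0, ∀ᶠ n in l, ∃! x, x ∈ closedBall t r ∧ Xn n x = u := by
  obtain ⟨A, hA⟩ := hreg
  -- `c` is half the injectivity threshold `‖A⁻¹‖⁻¹`; the other half, `‖A⁻¹‖⁻¹ - c = c`, is the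
  -- rate at which `Xn n` covers closed balls around `Xn n t`.
  set c : ℝ≥0 := ‖(A.symm : F →L[ℝ] E)‖₊⁻¹ / 2 with hc_def
  have hc : 0 < c := half_pos (inv_pos.2 A.nnnorm_symm_pos)
  have hnear : ∀ᶠ x in 𝓝 t, ‖X' x - A‖ ≤ (c / 2 : ℝ≥0) := by
    filter_upwards [hX'.eventually (closedBall_mem_nhds _ (half_pos hc))] with x hx
    rwa [hA, ← dist_eq_norm]
  filter_upwards [self_mem_nhdsWithin,
    nhdsWithin_le_nhds (eventually_closedBall_subset (inter_mem hV hnear))] with r hr hrV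
  have hrV' : closedBall t r ⊆ V := fun x hx => (hrV hx).1
  filter_upwards [TendstoUniformlyOn.eventually_approximatesLinearOn (convex_closedBall t r)
      (hXn.mono fun n h x hx => (h x (hrV' hx)).mono hrV') (hconv'.mono hrV')
      (fun x hx => (hrV hx).2) (half_lt_self hc),
    hconv (closedBall_mem_nhds u (mul_pos hc (mem_Ioi.1 hr)))] with n hn hval
  refine hn.existsUnique_mem_closedBall (half_lt_self (inv_pos.2 A.nnnorm_symm_pos))
    (mem_Ioi.1 hr).le ?_
  rw [dist_comm]
  convert mem_closedBall.1 hval using 2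
  simp [hc_def]
  ring

theorem eventually_ncard_sep_eq_of_tendstoUniformlyOn [CompleteSpace E] [Nontrivial E]
    {ι : Type*} {l : Filter ι} {T : Set E} (hT : IsCompact T) {X : E → F}
    {X' : E → E →L[ℝ] F} {Xn : ι → E → F} {Xn' : ι → E → E →L[ℝ] F} {u : F}
    (hX : ∀ t ∈ T, HasFDerivWithinAt X (X' t) T t) (hX' : ContinuousOn X' T)
    (hXn : ∀ᶠ n in l, ∀ t ∈ T, HasFDerivWithinAt (Xn n) (Xn' n t) T t)
    (hconv : TendstoUniformlyOn Xn X l T) (hconv' : TendstoUniformlyOn Xn' X' l T)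
    (hint : ∀ t ∈ T, X t = u → T ∈ 𝓝 t) (hreg : ∀ t ∈ T, X t = u → (X' t).IsInvertible) :
    ∀ᶠ n in l, {t ∈ T | Xn n t = u}.ncard = {t ∈ T | X t = u}.ncard := by
  set S := {t ∈ T | X t = u}
  have hXc : ContinuousOn X T := fun t ht => (hX t ht).continuousWithinAt
  have hSfin : S.Finite := hT.finite_sep_eq_of_isInvertible hXc
    (fun t ht htu => (hX t ht).hasFDerivAt (hint t ht htu)) hreg
  have hloc : ∀ t ∈ S, ∀ᶠ r in 𝓝[>] 0,
      closedBall t r ⊆ T ∧ ∀ᶠ n in l, ∃! x, x ∈ closedBall t r ∧ Xn n x = u :=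
    fun t ⟨ht, htu⟩ => ((eventually_closedBall_subset (hint t ht htu)).filter_mono
      nhdsWithin_le_nhds).and
      (eventually_existsUnique_mem_closedBall_of_tendstoUniformlyOn (hint t ht htu) hXn hconv'
        (htu ▸ hconv.tendsto_at ht) (hX'.continuousAt (hint t ht htu)) (hreg t ht htu))
  obtain ⟨r, ⟨hrloc, hdisj⟩, hr⟩ := ((hSfin.eventually_all.2 hloc).and
    (hSfin.eventually_pairwiseDisjoint_closedBall.filter_mono nhdsWithin_le_nhds) |>.and
    self_mem_nhdsWithin).exists
  have hK : ∀ x ∈ T \ ⋃ t ∈ S, ball t r, X x ≠ u := fun x hx hxu =>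
    hx.2 (mem_biUnion ⟨hx.1, hxu⟩ (mem_ball_self hr))
  filter_upwards [hSfin.eventually_all.2 fun t ht => (hrloc t ht).2,
    (hconv.mono sdiff_subset).eventually_forall_ne (hT.diff (isOpen_biUnion fun _ _ => isOpen_ball))
      (hXc.mono sdiff_subset) hK] with n huniq hout
  refine Set.ncard_eq_of_pairwiseDisjoint_of_existsUnique hdisj (fun x hx => ?_) fun t ht => ?_
  · have hxball : x ∈ ⋃ t ∈ S, ball t r := by_contra fun h => hout x ⟨hx.1, h⟩ hx.2
    exact biUnion_mono subset_rfl (fun _ _ => ball_subset_closedBall) hxball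
  · exact (existsUnique_congr fun x => and_congr_right fun hx =>
      and_iff_right ((hrloc t ht).1 hx)).2 (huniq t ht)

end Differentiable

/-- stability of the number of roots under `C^1` convergence:
`T ⊂ ℝ^d` compact, `X_n, X` of class `C^1` on an open neighborhood `U` of `T`,
with `X_n → X` and `X_n' → X'` uniformly on `T` (the `C^1` topology). If
`X(t) ≠ u` on `∂T` and `det X'(t) ≠ 0` at every solution `t ∈ T` of `X(t)=u`,
then `N_u(X_n,T) = N_u(X,T)` for all sufficiently large `n`; in particular
`N_u(X_n,T) → N_u(X,T)`. -/
theorem stmt6 (d : ℕ) (T U : Set (EuclideanSpace ℝ (Fin d)))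
    (hT : IsCompact T) (hU : IsOpen U) (hTU : T ⊆ U)
    (X : EuclideanSpace ℝ (Fin d) → EuclideanSpace ℝ (Fin d))
    (Xn : ℕ → EuclideanSpace ℝ (Fin d) → EuclideanSpace ℝ (Fin d))
    (hX : ContDiffOn ℝ 1 X U) (hXn : ∀ n, ContDiffOn ℝ 1 (Xn n) U)
    (hconv : TendstoUniformlyOn (fun n => Xn n) X atTop T)
    (hconv' : TendstoUniformlyOn (fun n t => fderiv ℝ (Xn n) t) (fun t => fderiv ℝ X t)
      atTop T)
    (u : EuclideanSpace ℝ (Fin d))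
    (hbd : ∀ t ∈ frontier T, X t ≠ u)
    (hreg : ∀ t ∈ T, X t = u → LinearMap.det ((fderiv ℝ X t).toLinearMap) ≠ 0) :
    (∀ᶠ n in atTop, {t ∈ T | Xn n t = u}.ncard = {t ∈ T | X t = u}.ncard) ∧
    Tendsto (fun n => ({t ∈ T | Xn n t = u}.ncard : ℝ)) atTop
      (nhds ({t ∈ T | X t = u}.ncard : ℝ)) := by
  have hmain : ∀ᶠ n in atTop, {t ∈ T | Xn n t = u}.ncard = {t ∈ T | X t = u}.ncard := by
    rcases subsingleton_or_nontrivial (EuclideanSpace ℝ (Fin d)) with hE | hE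
    · exact Eventually.of_forall fun n => by simp only [Subsingleton.elim _ u]
    have hint : ∀ t ∈ T, X t = u → T ∈ 𝓝 t := fun t ht htu =>
      mem_interior_iff_mem_nhds.1 (by_contra fun h => hbd t ⟨subset_closure ht, h⟩ htu)
    have hderiv : ∀ {f : EuclideanSpace ℝ (Fin d) → EuclideanSpace ℝ (Fin d)},
        ContDiffOn ℝ 1 f U → ∀ t ∈ T, HasFDerivWithinAt f (fderiv ℝ f t) T t := fun hf t ht =>
      ((hf.contDiffAt (hU.mem_nhds (hTU ht))).differentiableAt one_ne_zero).hasFDerivAt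
        |>.hasFDerivWithinAt
    exact eventually_ncard_sep_eq_of_tendstoUniformlyOn hT (hderiv hX)
      ((hX.continuousOn_fderiv_of_isOpen hU le_rfl).mono hTU)
      (Eventually.of_forall fun n => hderiv (hXn n)) hconv hconv' hint fun t ht htu =>
      ⟨_, (fderiv ℝ X t).coe_toContinuousLinearEquivOfDetNeZero (hreg t ht htu)⟩
  exact ⟨hmain, tendsto_const_nhds.congr' (hmain.mono fun n hn => by simp only [hn])⟩
end

section
/- Let X : [a,b] → R be a random process with a.s. C^1 paths such that p_{X(t)}(v) ≤ C for all t ∈ [a,b] and all v in some neighborhood of u ∈ R. Then P{∃ t ∈ [a,b] : X(t) = u and X'(t) = 0} = 0 (Bulinskaya's lemma). -/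
open MeasureTheory Set Filter Topology Metric

/-! A critical point `t` at level `u` makes `|X(s) - u| = o(|s - t|)`, so for every `η > 0` and
every fine enough uniform grid of mesh `h`, the grid point just left of `t` lies within `η h`
of `u`. The density bound gives probability at most `2 C η h` for each of the `(b - a) / h`
grid points, hence at most `2 C η (b - a)` in total; letting `η → 0` disposes of interior
critical points. At the endpoints the density bound alone makes `{X(t) = u}` null, since a point
has Lebesgue measure zero. -/

noncomputable def uniformGrid (a b : ℝ) (m k : ℕ) : ℝ := a + k * ((b - a) / m)

lemma uniformGrid_mem_Icc {a b : ℝ} (hab : a ≤ b) {m k : ℕ} (hk : k ≤ m) :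
    uniformGrid a b m k ∈ Icc a b := by
  rcases Nat.eq_zero_or_pos m with rfl | hm
  · simp [Nat.le_zero.1 hk, uniformGrid, hab]
  have hkm : (k : ℝ) / m ≤ 1 := div_le_one_of_le₀ (by exact_mod_cast hk) (Nat.cast_nonneg m)
  have hgrid : uniformGrid a b m k = a + (b - a) * (k / m) := by
    rw [uniformGrid]; ring
  rw [hgrid]
  constructor <;> nlinarith [div_nonneg (Nat.cast_nonneg k) (Nat.cast_nonneg m : (0 : ℝ) ≤ m)]

lemma exists_uniformGrid_le_of_mem_Ico {a b t : ℝ} (ht : t ∈ Ico a b) {m : ℕ} (hm : 0 < m) :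
    ∃ k < m, uniformGrid a b m k ≤ t ∧ t - uniformGrid a b m k < (b - a) / m := by
  have hh : 0 < (b - a) / m := div_pos (by linarith [ht.1.trans_lt ht.2]) (by exact_mod_cast hm)
  have hta : 0 ≤ (t - a) / ((b - a) / m) := div_nonneg (by linarith [ht.1]) hh.le
  refine ⟨⌊(t - a) / ((b - a) / m)⌋₊, ?_, ?_, ?_⟩
  · have hm' : (m : ℝ) ≠ 0 := by exact_mod_cast hm.ne'
    rw [Nat.floor_lt hta, div_lt_iff₀ hh, mul_div_cancel₀ _ hm']
    linarith [ht.2]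
  · have := Nat.floor_le hta
    rw [le_div_iff₀ hh] at this
    rw [uniformGrid]; linarith
  · have := Nat.lt_floor_add_one ((t - a) / ((b - a) / m))
    rw [div_lt_iff₀ hh] at this
    rw [uniformGrid]; linarith

lemma eventually_exists_uniformGrid_dist_le {f : ℝ → ℝ} {a b t η : ℝ} (ht : t ∈ Ico a b)
    (hf : HasDerivAt f 0 t) (hη : 0 < η) :
    ∀ᶠ m : ℕ in atTop, ∃ k < m,
      dist (f (uniformGrid a b m k)) (f t) ≤ η * ((b - a) / m) := by
  have hflat : ∀ᶠ s in 𝓝 t, dist (f s) (f t) ≤ η * dist s t := by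
    simpa [Real.dist_eq] using (hasDerivAt_iff_isLittleO.1 hf).def hη
  obtain ⟨δ, hδ, hball⟩ := Metric.eventually_nhds_iff.1 hflat
  have hmesh : ∀ᶠ m : ℕ in atTop, (b - a) / m < δ :=
    (tendsto_const_div_atTop_nhds_zero_nat (b - a)).eventually (gt_mem_nhds hδ)
  filter_upwards [hmesh, eventually_gt_atTop 0] with m hmδ hm
  obtain ⟨k, hk, hle, hlt⟩ := exists_uniformGrid_le_of_mem_Ico ht hm
  have hdist : dist (uniformGrid a b m k) t = t - uniformGrid a b m k := by
    rw [dist_comm, Real.dist_eq, abs_of_nonneg (by linarith)]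
  refine ⟨k, hk, (hball ?_).trans ?_⟩
  · rw [hdist]; linarith
  · rw [hdist]; gcongr

lemma ENNReal.eq_zero_of_forall_pos_le_ofReal_mul {x : ENNReal} {K : ℝ}
    (h : ∀ η > 0, x ≤ ENNReal.ofReal (K * η)) : x = 0 := by
  have hlim : Tendsto (fun η => ENNReal.ofReal (K * η)) (𝓝[>] 0) (𝓝 0) := by
    simpa using ENNReal.tendsto_ofReal
      (((continuous_const_mul K).tendsto 0).mono_left nhdsWithin_le_nhds)
  exact nonpos_iff_eq_zero.1 (ge_of_tendsto hlim (eventually_nhdsWithin_of_forall h))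

lemma measure_le_of_ae_eventually_mem {Ω : Type*} [MeasurableSpace Ω] {μ : Measure Ω}
    {A : Set Ω} {B : ℕ → Set Ω} {c : ENNReal}
    (hA : ∀ᵐ ω ∂μ, ω ∈ A → ∀ᶠ m in atTop, ω ∈ B m)
    (hB : ∀ᶠ m in atTop, μ (B m) ≤ c) : μ A ≤ c := by
  obtain ⟨N₀, hN₀⟩ := eventually_atTop.1 hB
  have hmono : Monotone fun N => ⋂ n ≥ N, B n :=
    fun N N' hNN' => biInter_mono (fun n hn => hNN'.trans hn) fun _ _ => subset_rfl
  calc μ A ≤ μ (⋃ N, ⋂ n ≥ N, B n) := by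
        refine measure_mono_ae ?_
        filter_upwards [hA] with ω hω hωA
        change ω ∈ ⋃ N, ⋂ n ≥ N, B n
        simpa only [mem_iUnion, mem_iInter, eventually_atTop] using hω hωA
    _ = ⨆ N, μ (⋂ n ≥ N, B n) := hmono.measure_iUnion
    _ ≤ c := iSup_le fun N =>
        (measure_mono (biInter_subset_of_mem (le_max_left N N₀))).trans
          (hN₀ _ (le_max_right _ _))

section DensityBound

variable {Ω : Type*} [MeasurableSpace Ω] {P : Measure Ω} {X : Ω → ℝ → ℝ} {a b u C : ℝ}
  {V : Set ℝ}

lemma measure_exists_uniformGrid_mem_closedBall_le (hab : a ≤ b)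
    (hdens : ∀ t ∈ Icc a b, ∀ s ⊆ V, MeasurableSet s →
      P {ω | X ω t ∈ s} ≤ ENNReal.ofReal C * volume s)
    {m : ℕ} (hm : 0 < m) {η : ℝ} (hη : 0 ≤ η)
    (hV : closedBall u (η * ((b - a) / m)) ⊆ V) :
    P {ω | ∃ k < m, X ω (uniformGrid a b m k) ∈ closedBall u (η * ((b - a) / m))} ≤
      ENNReal.ofReal (2 * C * (b - a) * η) := by
  set s := closedBall u (η * ((b - a) / m))
  have hs : 0 ≤ 2 * (η * ((b - a) / m)) := by
    have : 0 ≤ b - a := sub_nonneg.2 hab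
    positivity
  have hunion : {ω | ∃ k < m, X ω (uniformGrid a b m k) ∈ s} =
      ⋃ k ∈ Finset.range m, {ω | X ω (uniformGrid a b m k) ∈ s} := by
    ext ω; simp
  calc P {ω | ∃ k < m, X ω (uniformGrid a b m k) ∈ s}
      ≤ ∑ k ∈ Finset.range m, P {ω | X ω (uniformGrid a b m k) ∈ s} :=
        hunion ▸ measure_biUnion_finset_le _ _
    _ ≤ ∑ _k ∈ Finset.range m, ENNReal.ofReal C * volume s := Finset.sum_le_sum fun k hk =>
        hdens _ (uniformGrid_mem_Icc hab (Finset.mem_range.1 hk).le) s hV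
          isClosed_closedBall.measurableSet
    _ = ENNReal.ofReal (m * (C * (2 * (η * ((b - a) / m))))) := by
        rw [Finset.sum_const, Finset.card_range, nsmul_eq_mul, Real.volume_closedBall,
          ← ENNReal.ofReal_mul' hs, ← ENNReal.ofReal_natCast,
          ← ENNReal.ofReal_mul (Nat.cast_nonneg m)]
    _ = ENNReal.ofReal (2 * C * (b - a) * η) := by
        congr 1; field_simp

lemma measure_interior_critical_level_le (hab : a ≤ b)
    (hC1 : ∀ᵐ ω ∂P, ContDiffOn ℝ 1 (X ω) (Icc a b)) (hV : V ∈ 𝓝 u)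
    (hdens : ∀ t ∈ Icc a b, ∀ s ⊆ V, MeasurableSet s →
      P {ω | X ω t ∈ s} ≤ ENNReal.ofReal C * volume s)
    {η : ℝ} (hη : 0 < η) :
    P {ω | ∃ t ∈ Ioo a b, X ω t = u ∧ deriv (X ω) t = 0} ≤
      ENNReal.ofReal (2 * C * (b - a) * η) := by
  obtain ⟨r, hr, hrV⟩ := Metric.nhds_basis_closedBall.mem_iff.1 hV
  refine measure_le_of_ae_eventually_mem
    (B := fun m =>
      {ω | ∃ k < m, X ω (uniformGrid a b m k) ∈ closedBall u (η * ((b - a) / m))})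
    ?_ ?_
  · filter_upwards [hC1] with ω hω ⟨t, ht, htu, htd⟩
    have hderiv : HasDerivAt (X ω) 0 t := htd ▸
      ((hω.differentiableOn one_ne_zero).differentiableAt (Icc_mem_nhds ht.1 ht.2)).hasDerivAt
    filter_upwards [eventually_exists_uniformGrid_dist_le (Ioo_subset_Ico_self ht) hderiv hη]
      with m ⟨k, hk, hdist⟩
    exact ⟨k, hk, htu ▸ hdist⟩
  · have hradius : Tendsto (fun m : ℕ => η * ((b - a) / m)) atTop (𝓝 0) := by
      simpa using (tendsto_const_div_atTop_nhds_zero_nat (b - a)).const_mul η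
    filter_upwards [hradius.eventually (ge_mem_nhds hr), eventually_gt_atTop 0] with m hmr hm
    exact measure_exists_uniformGrid_mem_closedBall_le hab hdens hm hη.le
      ((closedBall_subset_closedBall hmr).trans hrV)

end DensityBound

theorem stmt12_general (a b : ℝ) (hab : a ≤ b)
    (Ω : Type*) [MeasureSpace Ω] (P : Measure Ω)
    (X : Ω → ℝ → ℝ)
    (hC1 : ∀ᵐ ω ∂P, ContDiffOn ℝ 1 (X ω) (Set.Icc a b))
    (u C : ℝ) (V : Set ℝ) (hV : V ∈ nhds u)
    (hdens : ∀ t ∈ Set.Icc a b, ∀ s ⊆ V, MeasurableSet s →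
      P {ω | X ω t ∈ s} ≤ ENNReal.ofReal C * volume s) :
    P {ω | ∃ t ∈ Set.Icc a b, X ω t = u ∧ deriv (X ω) t = 0} = 0 := by
  have hlevel : ∀ t ∈ Icc a b, P {ω | X ω t = u} = 0 := fun t ht => by
    simpa using hdens t ht {u} (singleton_subset_iff.2 (mem_of_mem_nhds hV))
      (measurableSet_singleton u)
  have hinterior : P {ω | ∃ t ∈ Ioo a b, X ω t = u ∧ deriv (X ω) t = 0} = 0 :=
    ENNReal.eq_zero_of_forall_pos_le_ofReal_mul fun η hη =>
      measure_interior_critical_level_le hab hC1 hV hdens hη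
  have hsplit : {ω | ∃ t ∈ Icc a b, X ω t = u ∧ deriv (X ω) t = 0} ⊆ {ω | X ω a = u} ∪
      {ω | X ω b = u} ∪ {ω | ∃ t ∈ Ioo a b, X ω t = u ∧ deriv (X ω) t = 0} := by
    rintro ω ⟨t, ht, htu, htd⟩
    rcases ht.1.eq_or_lt with rfl | hat
    · exact Or.inl (Or.inl htu)
    rcases ht.2.eq_or_lt with rfl | htb
    · exact Or.inl (Or.inr htu)
    exact Or.inr ⟨t, ⟨hat, htb⟩, htu, htd⟩
  have hends :=
    measure_union_null (hlevel a (left_mem_Icc.2 hab)) (hlevel b (right_mem_Icc.2 hab))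
  exact measure_mono_null hsplit (measure_union_null hends hinterior)

/-- Bulinskaya's lemma, one-dimensional: `X : [a,b] → ℝ` a
random process with a.s. `C^1` paths such that the densities of the `X(t)` are
bounded by a common constant `C` on a neighborhood `V` of `u` (expressed as
`P(X(t) ∈ s) ≤ C · λ(s)` for Borel `s ⊆ V`). Then
`P{∃ t ∈ [a,b] : X(t) = u, X'(t) = 0} = 0`. -/
theorem stmt12 (a b : ℝ) (hab : a ≤ b)
    (Ω : Type*) [MeasureSpace Ω] (P : Measure Ω) [IsProbabilityMeasure P]
    (X : Ω → ℝ → ℝ)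
    (hmeas : Measurable fun q : Ω × ℝ => X q.1 q.2)
    (hC1 : ∀ᵐ ω ∂P, ContDiffOn ℝ 1 (X ω) (Set.Icc a b))
    (u C : ℝ) (V : Set ℝ) (hV : V ∈ nhds u)
    (hdens : ∀ t ∈ Set.Icc a b, ∀ s ⊆ V, MeasurableSet s →
      P {ω | X ω t ∈ s} ≤ ENNReal.ofReal C * volume s) :
    P {ω | ∃ t ∈ Set.Icc a b, X ω t = u ∧ deriv (X ω) t = 0} = 0 :=
  stmt12_general a b hab Ω P X hC1 u C V hV hdens
end
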